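/- If ℓ is convex in its first argument, λ > 0, and J(X) has full row rank, then for every nonempty S ⊆ D the dual risk L̃_S is strictly convex on ℝ^{d_out·n} and admits a unique global minimizer. -/
import Mathlib


open Finset Matrix

noncomputable section

/-- Squared ℓ₂ norm of a finitely-indexed real vector. -/
def sqnorm {ι : Type*} [Fintype ι] (v : ι → ℝ) : ℝ := ∑ i, v i ^ 2

/-- The linearized model `f^lin(x, θ) = f(x, θ') + J(x)(θ - θ')`, where `f0 x = f(x, θ')`
and `J x` is the Jacobian of `f(x, ·)` at `θ'`. -/
def flin {din dout dθ : ℕ}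
    (f0 : (Fin din → ℝ) → Fin dout → ℝ)
    (J : (Fin din → ℝ) → Matrix (Fin dout) (Fin dθ) ℝ)
    (θ' : Fin dθ → ℝ) (xt : Fin din → ℝ) (θ : Fin dθ → ℝ) : Fin dout → ℝ :=
  f0 xt + J xt *ᵥ (θ - θ')

/-- Regularized empirical risk `L̂_S(θ)` of the linearized model over the subset of the
dataset indexed by `S`. -/
def empRisk {din dout dθ n : ℕ}
    (f0 : (Fin din → ℝ) → Fin dout → ℝ)
    (J : (Fin din → ℝ) → Matrix (Fin dout) (Fin dθ) ℝ)
    (θ' : Fin dθ → ℝ) (X : Fin n → Fin din → ℝ) (Y : Fin n → Fin dout → ℝ)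
    (ℓ : (Fin dout → ℝ) → (Fin dout → ℝ) → ℝ) (lam : ℝ)
    (S : Finset (Fin n)) (θ : Fin dθ → ℝ) : ℝ :=
  (S.card : ℝ)⁻¹ * ∑ i ∈ S, (ℓ (flin f0 J θ' (X i) θ) (Y i) + lam / 2 * sqnorm (θ - θ'))

/-- Gradient of the loss `ℓ(·, y)` in its first argument, as a vector. -/
def gradloss {dout : ℕ} (ℓ : (Fin dout → ℝ) → (Fin dout → ℝ) → ℝ)
    (ytgt u : Fin dout → ℝ) : Fin dout → ℝ :=
  fun a => fderiv ℝ (fun v => ℓ v ytgt) u (Pi.single a 1)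

/-- Hessian of the loss `ℓ(·, y)` in its first argument, as a matrix. -/
def hessloss {dout : ℕ} (ℓ : (Fin dout → ℝ) → (Fin dout → ℝ) → ℝ)
    (ytgt u : Fin dout → ℝ) : Fin dout → Fin dout → ℝ :=
  fun a b => fderiv ℝ (fun v => fderiv ℝ (fun w => ℓ w ytgt) v (Pi.single b 1)) u (Pi.single a 1)

/-- Stacked Jacobian `J(X) ∈ ℝ^{d_out·n × d_θ}`, whose `i`-th row block is `J(x_i)`. -/
def JX {din dout dθ n : ℕ}
    (J : (Fin din → ℝ) → Matrix (Fin dout) (Fin dθ) ℝ)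
    (X : Fin n → Fin din → ℝ) : Matrix (Fin n × Fin dout) (Fin dθ) ℝ :=
  fun q p => J (X q.1) q.2 p

/-- Empirical NTK Gram matrix `K = K(X, X) = J(X) J(X)ᵀ`. -/
def Kmat {din dout dθ n : ℕ}
    (J : (Fin din → ℝ) → Matrix (Fin dout) (Fin dθ) ℝ)
    (X : Fin n → Fin din → ℝ) : Matrix (Fin n × Fin dout) (Fin n × Fin dout) ℝ :=
  JX J X * (JX J X)ᵀ

/-- NTK row block `K(x, X) = J(x) J(X)ᵀ ∈ ℝ^{d_out × d_out·n}`. -/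
def KxX {din dout dθ n : ℕ}
    (J : (Fin din → ℝ) → Matrix (Fin dout) (Fin dθ) ℝ)
    (X : Fin n → Fin din → ℝ) (xt : Fin din → ℝ) : Matrix (Fin dout) (Fin n × Fin dout) ℝ :=
  J xt * (JX J X)ᵀ

/-- Reparameterization `φ(Δα) = θ̂* + J(X)ᵀ Δα`. -/
def phi {din dout dθ n : ℕ}
    (J : (Fin din → ℝ) → Matrix (Fin dout) (Fin dθ) ℝ)
    (X : Fin n → Fin din → ℝ) (θstar : Fin dθ → ℝ)
    (Δα : Fin n × Fin dout → ℝ) : Fin dθ → ℝ :=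
  θstar + (JX J X)ᵀ *ᵥ Δα

/-- Reparameterized model `g^lin(x, Δα) = f^lin(x, θ̂*) + K(x, X) Δα`. -/
def glin {din dout dθ n : ℕ}
    (f0 : (Fin din → ℝ) → Fin dout → ℝ)
    (J : (Fin din → ℝ) → Matrix (Fin dout) (Fin dθ) ℝ)
    (θ' : Fin dθ → ℝ) (X : Fin n → Fin din → ℝ) (θstar : Fin dθ → ℝ)
    (xt : Fin din → ℝ) (Δα : Fin n × Fin dout → ℝ) : Fin dout → ℝ :=
  flin f0 J θ' xt θstar + KxX J X xt *ᵥ Δα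

/-- Dual risk `L̃_S(Δα) = (1/|S|) Σ_{(x,y)∈S} ( ℓ(g^lin(x, Δα), y) + (λ/2)‖φ(Δα) − θ'‖₂² )`. -/
def dualRisk {din dout dθ n : ℕ}
    (f0 : (Fin din → ℝ) → Fin dout → ℝ)
    (J : (Fin din → ℝ) → Matrix (Fin dout) (Fin dθ) ℝ)
    (θ' : Fin dθ → ℝ) (X : Fin n → Fin din → ℝ) (Y : Fin n → Fin dout → ℝ)
    (ℓ : (Fin dout → ℝ) → (Fin dout → ℝ) → ℝ) (lam : ℝ) (θstar : Fin dθ → ℝ)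
    (S : Finset (Fin n)) (Δα : Fin n × Fin dout → ℝ) : ℝ :=
  (S.card : ℝ)⁻¹ *
    ∑ i ∈ S, (ℓ (glin f0 J θ' X θstar (X i) Δα) (Y i) +
      lam / 2 * sqnorm (phi J X θstar Δα - θ'))

/-- The dual coefficient vector `Δα_r*` of Proposition 3.1: on the forget indices
(`q.1 ∉ Dr`) it is `(1/λ) ∇_{f^lin(X_f, θ̂*)} L̂_D`, and on the retain indices (`q.1 ∈ Dr`)
it is `−(1/λ)( ∇_{f^lin(X_r, θ̂_r*)} L̂_{D_r} − ∇_{f^lin(X_r, θ̂*)} L̂_D )`. -/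
def dalpha {din dout dθ n : ℕ}
    (f0 : (Fin din → ℝ) → Fin dout → ℝ)
    (J : (Fin din → ℝ) → Matrix (Fin dout) (Fin dθ) ℝ)
    (θ' : Fin dθ → ℝ) (X : Fin n → Fin din → ℝ) (Y : Fin n → Fin dout → ℝ)
    (ℓ : (Fin dout → ℝ) → (Fin dout → ℝ) → ℝ) (lam : ℝ)
    (Dr : Finset (Fin n)) (θstar θrstar : Fin dθ → ℝ) :
    Fin n × Fin dout → ℝ :=
  fun q =>
    if q.1 ∈ Dr then
      -lam⁻¹ * ((Dr.card : ℝ)⁻¹ * gradloss ℓ (Y q.1) (flin f0 J θ' (X q.1) θrstar) q.2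
        - (n : ℝ)⁻¹ * gradloss ℓ (Y q.1) (flin f0 J θ' (X q.1) θstar) q.2)
    else
      lam⁻¹ * ((n : ℝ)⁻¹ * gradloss ℓ (Y q.1) (flin f0 J θ' (X q.1) θstar) q.2)


section Aux

variable {ι : Type*} [Fintype ι]

lemma sqnorm_nonneg (v : ι → ℝ) : 0 ≤ sqnorm v :=
  Finset.sum_nonneg fun _ _ => sq_nonneg _

lemma sqnorm_pos {v : ι → ℝ} (h : v ≠ 0) : 0 < sqnorm v := by
  obtain ⟨i, hi⟩ := Function.ne_iff.mp h
  exact Finset.sum_pos' (fun j _ => sq_nonneg _) ⟨i, Finset.mem_univ i, by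
    have := abs_pos.mpr hi
    nlinarith [sq_abs (v i)]⟩

lemma sqnorm_combo (t s : ℝ) (hts : t + s = 1) (u v : ι → ℝ) :
    t * sqnorm u + s * sqnorm v = sqnorm (t • u + s • v) + t * s * sqnorm (u - v) := by
  have hs : s = 1 - t := by linarith
  subst hs
  simp only [sqnorm, Finset.mul_sum, ← Finset.sum_add_distrib]
  refine Finset.sum_congr rfl fun i _ => ?_
  simp only [Pi.add_apply, Pi.smul_apply, Pi.sub_apply, smul_eq_mul]
  ring

lemma norm_sq_le_sqnorm (u : ι → ℝ) : ‖u‖ ^ 2 ≤ sqnorm u := by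
  rcases isEmpty_or_nonempty ι with h | h
  · simp [sqnorm, Subsingleton.elim u 0]
  · obtain ⟨i, -, hi⟩ := Finset.exists_mem_eq_sup Finset.univ Finset.univ_nonempty
      (fun i => ‖u i‖₊)
    have hnn : ‖u‖₊ = ‖u i‖₊ := by rw [Pi.nnnorm_def, hi]
    have hnorm : ‖u‖ = ‖u i‖ := congrArg NNReal.toReal hnn
    rw [hnorm, Real.norm_eq_abs, sq_abs]
    exact Finset.single_le_sum (f := fun j => u j ^ 2) (fun j _ => sq_nonneg _)
      (Finset.mem_univ i)

lemma continuous_sqnorm : Continuous fun v : ι → ℝ => sqnorm v :=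
  continuous_finset_sum _ fun i _ => (continuous_apply i).pow 2

end Aux

/-- if `ℓ` is convex in its first argument, `λ > 0`, and `J(X)` has full row
rank, then for every nonempty `S ⊆ D`, the dual risk `L̃_S` is strictly convex and admits
a unique global minimizer. -/
theorem stmt_8 {din dout dθ n : ℕ} (hn : 0 < n)
    (f0 : (Fin din → ℝ) → Fin dout → ℝ)
    (J : (Fin din → ℝ) → Matrix (Fin dout) (Fin dθ) ℝ)
    (θ' : Fin dθ → ℝ) (X : Fin n → Fin din → ℝ) (Y : Fin n → Fin dout → ℝ)
    (ℓ : (Fin dout → ℝ) → (Fin dout → ℝ) → ℝ) (lam : ℝ)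
    (hℓ0 : ∀ u ytgt, 0 ≤ ℓ u ytgt)
    (hconv : ∀ ytgt, ConvexOn ℝ Set.univ fun u => ℓ u ytgt)
    (hdiff : ∀ ytgt, Differentiable ℝ fun u => ℓ u ytgt)
    (hlam : 0 < lam)
    (hrank : LinearIndependent ℝ fun q : Fin n × Fin dout => (JX J X q : Fin dθ → ℝ))
    (θstar : Fin dθ → ℝ)
    (hmin : ∀ θ : Fin dθ → ℝ,
      empRisk f0 J θ' X Y ℓ lam Finset.univ θstar ≤ empRisk f0 J θ' X Y ℓ lam Finset.univ θ)
    (S : Finset (Fin n)) (hS : S.Nonempty) :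
    StrictConvexOn ℝ Set.univ (dualRisk f0 J θ' X Y ℓ lam θstar S) ∧
    ∃! Δm : Fin n × Fin dout → ℝ, ∀ Δα : Fin n × Fin dout → ℝ,
      dualRisk f0 J θ' X Y ℓ lam θstar S Δm ≤ dualRisk f0 J θ' X Y ℓ lam θstar S Δα := by
  classical
  -- the linear map Δα ↦ J(X)ᵀ Δα
  set A : (Fin n × Fin dout → ℝ) →ₗ[ℝ] (Fin dθ → ℝ) := Matrix.mulVecLin (JX J X)ᵀ with hA
  have hAv : ∀ v, A v = (JX J X)ᵀ *ᵥ v := fun v => rfl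
  have hAinj : Function.Injective A := by
    rw [← LinearMap.ker_eq_bot, LinearMap.ker_eq_bot']
    intro g hg
    have hsum : ∑ q, g q • JX J X q = 0 := by
      funext p
      have h := congrFun hg p
      simpa [hAv, Matrix.mulVec, dotProduct, Matrix.transpose_apply, Finset.sum_apply,
        mul_comm] using h
    exact funext fun q => Fintype.linearIndependent_iff.mp hrank g hsum q
  set d : Fin dθ → ℝ := θstar - θ' with hd
  have hphiA : ∀ Δα, phi J X θstar Δα - θ' = d + A Δα := by
    intro Δα
    funext p
    simp [phi, hAv, hd]
    ring
  -- affine combination identities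
  have hglin : ∀ xt (t s : ℝ), t + s = 1 → ∀ a b,
      glin f0 J θ' X θstar xt (t • a + s • b)
        = t • glin f0 J θ' X θstar xt a + s • glin f0 J θ' X θstar xt b := by
    intro xt t s hts a b
    have hs : s = 1 - t := by linarith
    subst hs
    funext j
    simp only [glin, Matrix.mulVec_add, Matrix.mulVec_smul, Pi.add_apply, Pi.smul_apply,
      smul_eq_mul]
    ring
  have hphic : ∀ (t s : ℝ), t + s = 1 → ∀ a b,
      phi J X θstar (t • a + s • b) - θ'
        = t • (phi J X θstar a - θ') + s • (phi J X θstar b - θ') := by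
    intro t s hts a b
    rw [hphiA, hphiA, hphiA, map_add, _root_.map_smul, _root_.map_smul]
    funext p
    simp only [Pi.add_apply, Pi.smul_apply, smul_eq_mul]
    linear_combination (-(θstar - θ') p) * hts
  have hcardpos : (0 : ℝ) < (S.card : ℝ) := by
    exact_mod_cast Finset.card_pos.mpr hS
  -- strict convexity
  have hsc : StrictConvexOn ℝ Set.univ (dualRisk f0 J θ' X Y ℓ lam θstar S) := by
    refine ⟨convex_univ, ?_⟩
    intro x _ y _ hxy t s ht hs hts
    have key : ∑ i ∈ S, (ℓ (glin f0 J θ' X θstar (X i) (t • x + s • y)) (Y i) +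
          lam / 2 * sqnorm (phi J X θstar (t • x + s • y) - θ'))
        < ∑ i ∈ S, (t * (ℓ (glin f0 J θ' X θstar (X i) x) (Y i) +
            lam / 2 * sqnorm (phi J X θstar x - θ')) +
          s * (ℓ (glin f0 J θ' X θstar (X i) y) (Y i) +
            lam / 2 * sqnorm (phi J X θstar y - θ'))) := by
      refine Finset.sum_lt_sum_of_nonempty hS fun i _ => ?_
      have h1 : ℓ (glin f0 J θ' X θstar (X i) (t • x + s • y)) (Y i)
          ≤ t * ℓ (glin f0 J θ' X θstar (X i) x) (Y i)
            + s * ℓ (glin f0 J θ' X θstar (X i) y) (Y i) := by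
        rw [hglin (X i) t s hts x y]
        simpa using (hconv (Y i)).2 (Set.mem_univ _) (Set.mem_univ _) ht.le hs.le hts
      have hne : phi J X θstar x - θ' ≠ phi J X θstar y - θ' := by
        rw [hphiA, hphiA]
        intro h
        exact hxy (hAinj (by
          have := add_left_cancel h
          exact this))
      have hid := sqnorm_combo t s hts (phi J X θstar x - θ') (phi J X θstar y - θ')
      have hpos : 0 < sqnorm ((phi J X θstar x - θ') - (phi J X θstar y - θ')) :=
        sqnorm_pos (sub_ne_zero.mpr hne)
      have h2 : lam / 2 * sqnorm (phi J X θstar (t • x + s • y) - θ')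
          < t * (lam / 2 * sqnorm (phi J X θstar x - θ'))
            + s * (lam / 2 * sqnorm (phi J X θstar y - θ')) := by
        rw [hphic t s hts x y]
        nlinarith [mul_pos (mul_pos ht hs) hpos, hlam]
      linarith
    have hcinv : (0 : ℝ) < (S.card : ℝ)⁻¹ := inv_pos.mpr hcardpos
    calc dualRisk f0 J θ' X Y ℓ lam θstar S (t • x + s • y)
        < (S.card : ℝ)⁻¹ * ∑ i ∈ S, (t * (ℓ (glin f0 J θ' X θstar (X i) x) (Y i) +
            lam / 2 * sqnorm (phi J X θstar x - θ')) +
          s * (ℓ (glin f0 J θ' X θstar (X i) y) (Y i) +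
            lam / 2 * sqnorm (phi J X θstar y - θ'))) := by
          exact mul_lt_mul_of_pos_left key hcinv
      _ = t • dualRisk f0 J θ' X Y ℓ lam θstar S x
          + s • dualRisk f0 J θ' X Y ℓ lam θstar S y := by
          simp only [dualRisk, smul_eq_mul, Finset.sum_add_distrib, ← Finset.mul_sum]
          ring
  refine ⟨hsc, ?_⟩
  -- continuity
  have hmvc : ∀ (κ : Type) [Fintype κ] (M : Matrix κ (Fin n × Fin dout) ℝ),
      Continuous fun v : Fin n × Fin dout → ℝ => M *ᵥ v := by
    intro κ _ M
    exact (Matrix.mulVecLin M).continuous_of_finiteDimensional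
  have hcont : Continuous (dualRisk f0 J θ' X Y ℓ lam θstar S) := by
    unfold dualRisk
    refine continuous_const.mul (continuous_finset_sum _ fun i _ => Continuous.add ?_ ?_)
    · exact (hdiff (Y i)).continuous.comp
        (continuous_const.add (hmvc _ (KxX J X (X i))))
    · exact continuous_const.mul (continuous_sqnorm.comp
        ((continuous_const.add (hmvc _ (JX J X)ᵀ)).sub continuous_const))
  -- lower bound by the regularizer
  have hlow : ∀ Δα, lam / 2 * sqnorm (phi J X θstar Δα - θ')
      ≤ dualRisk f0 J θ' X Y ℓ lam θstar S Δα := by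
    intro Δα
    have hsum : (S.card : ℝ) * (lam / 2 * sqnorm (phi J X θstar Δα - θ'))
        ≤ ∑ i ∈ S, (ℓ (glin f0 J θ' X θstar (X i) Δα) (Y i) +
            lam / 2 * sqnorm (phi J X θstar Δα - θ')) := by
      calc (S.card : ℝ) * (lam / 2 * sqnorm (phi J X θstar Δα - θ'))
          = ∑ _i ∈ S, lam / 2 * sqnorm (phi J X θstar Δα - θ') := by
            rw [Finset.sum_const, nsmul_eq_mul]
        _ ≤ _ := Finset.sum_le_sum fun i _ => le_add_of_nonneg_left (hℓ0 _ _)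
    have := mul_le_mul_of_nonneg_left hsum (le_of_lt (inv_pos.mpr hcardpos))
    rw [← mul_assoc, inv_mul_cancel₀ (ne_of_gt hcardpos), one_mul] at this
    exact this
  -- coercivity
  obtain ⟨K, hK0, hanti⟩ := A.exists_antilipschitzWith (LinearMap.ker_eq_bot.mpr hAinj)
  have hKpos : (0 : ℝ) < (K : ℝ) := hK0
  have hKb : ∀ v, ‖v‖ ≤ (K : ℝ) * ‖A v‖ := by
    intro v
    have := hanti.le_mul_dist v 0
    simpa [dist_eq_norm] using this
  have key : ∀ Δα, lam / 2 * (max (‖Δα‖ / (K : ℝ) - ‖d‖) 0) ^ 2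
      ≤ dualRisk f0 J θ' X Y ℓ lam θstar S Δα := by
    intro Δα
    refine le_trans ?_ (hlow Δα)
    have h2 : max (‖Δα‖ / (K : ℝ) - ‖d‖) 0 ≤ ‖phi J X θstar Δα - θ'‖ := by
      rw [hphiA]
      refine max_le ?_ (norm_nonneg _)
      have h3 : ‖A Δα‖ - ‖d‖ ≤ ‖d + A Δα‖ := by
        have h4 := norm_sub_norm_le (A Δα) (-d)
        simpa [sub_neg_eq_add, add_comm] using h4
      have h5 : ‖Δα‖ / (K : ℝ) ≤ ‖A Δα‖ := by
        rw [div_le_iff₀ hKpos]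
        calc ‖Δα‖ ≤ (K : ℝ) * ‖A Δα‖ := hKb Δα
          _ = ‖A Δα‖ * (K : ℝ) := mul_comm _ _
      linarith
    have h1 : (max (‖Δα‖ / (K : ℝ) - ‖d‖) 0) ^ 2 ≤ sqnorm (phi J X θstar Δα - θ') :=
      le_trans (pow_le_pow_left₀ (le_max_right _ _) h2 2) (norm_sq_le_sqnorm _)
    have : (0:ℝ) ≤ lam / 2 := by positivity
    nlinarith
  have hcoer : Filter.Tendsto (dualRisk f0 J θ' X Y ℓ lam θstar S)
      (Filter.cocompact _) Filter.atTop := by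
    have hmax : Filter.Tendsto (fun r : ℝ => max (r / (K : ℝ) - ‖d‖) 0)
        Filter.atTop Filter.atTop := by
      refine Filter.tendsto_atTop_mono (fun r => le_max_left _ _) ?_
      have h6 : Filter.Tendsto (fun r : ℝ => r / (K : ℝ)) Filter.atTop Filter.atTop :=
        Filter.Tendsto.atTop_div_const hKpos Filter.tendsto_id
      simpa [sub_eq_add_neg] using
        Filter.tendsto_atTop_add_const_right Filter.atTop (-‖d‖) h6
    have h1 : Filter.Tendsto (fun r : ℝ => lam / 2 * (max (r / (K : ℝ) - ‖d‖) 0) ^ 2)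
        Filter.atTop Filter.atTop := by
      refine Filter.Tendsto.const_mul_atTop (by positivity) ?_
      exact (Filter.tendsto_pow_atTop two_ne_zero).comp hmax
    exact Filter.tendsto_atTop_mono key (h1.comp tendsto_norm_cocompact_atTop)
  obtain ⟨m, hm⟩ := hcont.exists_forall_le hcoer
  refine ⟨m, hm, ?_⟩
  intro y hy
  by_contra hne
  have hmid := hsc.2 (Set.mem_univ y) (Set.mem_univ m) hne
    (by norm_num : (0:ℝ) < 1/2) (by norm_num : (0:ℝ) < 1/2) (by norm_num)
  have h7 := hm ((1/2 : ℝ) • y + (1/2 : ℝ) • m)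
  have h8 := hy m
  have h9 := hm y
  simp only [smul_eq_mul] at hmid
  linarith
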